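/- arXiv:2411.09719 — 2 statements merged into one kernel-verified Lean document; each statement's English description precedes it below -/
import Mathlib

section
/- Let θ ∈ L¹([0,1], ℝʳ) and g ∈ L^∞([0,1], ℝʳ) with g(t) ≤ 0 a.e. (componentwise). If ∫₀¹ θ(t)ᵀ(w(t) − g(t)) dt ≤ 0 for every w ∈ L^∞([0,1], ℝʳ) with w(t) ≤ 0 a.e., then for a.e. t ∈ [0,1] and each j = 1,…,r: θⱼ(t) ≥ 0 and θⱼ(t)·gⱼ(t) = 0. -/
open MeasureTheory

theorem pointwise_complementarity (r : ℕ)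
    (μ : Measure ℝ) (hμ : μ = volume.restrict (Set.Icc 0 1))
    (θ : ℝ → Fin r → ℝ) (hθ : ∀ j, Integrable (fun t => θ t j) μ)
    (g : ℝ → Fin r → ℝ) (hgmeas : ∀ j, Measurable fun t => g t j)
    (hgbd : ∃ C, ∀ᵐ t ∂μ, ∀ j, |g t j| ≤ C)
    (hgle : ∀ᵐ t ∂μ, ∀ j, g t j ≤ 0)
    (h : ∀ w : ℝ → Fin r → ℝ, (∀ j, Measurable fun t => w t j) →
      (∃ C, ∀ᵐ t ∂μ, ∀ j, |w t j| ≤ C) → (∀ᵐ t ∂μ, ∀ j, w t j ≤ 0) →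
      (∫ t, dotProduct (θ t) (w t - g t) ∂μ) ≤ 0) :
    ∀ᵐ t ∂μ, ∀ j, 0 ≤ θ t j ∧ θ t j * g t j = 0 := by
  obtain ⟨Cg, hCg⟩ := hgbd
  -- Key: test with w equal to g except in component j
  have key : ∀ (j : Fin r) (v : ℝ → ℝ), Measurable v →
      (∃ C, ∀ᵐ t ∂μ, |v t| ≤ C) → (∀ᵐ t ∂μ, v t ≤ 0) →
      (∫ t, θ t j * (v t - g t j) ∂μ) ≤ 0 := by
    intro j v hvm hvbd hvle
    obtain ⟨Cv, hCv⟩ := hvbd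
    have hw := h (fun t => Function.update (g t) j (v t)) ?_ ?_ ?_
    · have eq1 : (fun t => dotProduct (θ t)
          ((fun t => Function.update (g t) j (v t)) t - g t)) =
          fun t => θ t j * (v t - g t j) := by
        funext t
        simp only [dotProduct, Pi.sub_apply]
        rw [Finset.sum_eq_single j]
        · simp
        · intro i _ hij; simp [Function.update_apply, hij]
        · simp
      rwa [eq1] at hw
    · intro i
      by_cases hij : i = j
      · subst hij; simpa [Function.update_apply] using hvm
      · simpa [Function.update_apply, hij] using hgmeas i
    · refine ⟨max Cv Cg, ?_⟩
      filter_upwards [hCv, hCg] with t h1 h2 i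
      by_cases hij : i = j
      · subst hij; simp only [Function.update_self]
        exact le_trans h1 (le_max_left _ _)
      · simp only [Function.update_apply, hij, if_false]
        exact le_trans (h2 i) (le_max_right _ _)
    · filter_upwards [hvle, hgle] with t h1 h2 i
      by_cases hij : i = j
      · subst hij; simpa using h1
      · simpa [Function.update_apply, hij] using h2 i
  -- Step 1: nonnegativity
  have hnn : ∀ j : Fin r, ∀ᵐ t ∂μ, 0 ≤ θ t j := by
    intro j
    have := ae_nonneg_of_forall_setIntegral_nonneg (hθ j) ?_
    · filter_upwards [this] with t ht using ht
    intro s hs hμs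
    have hv := key j (fun t => g t j - s.indicator (fun _ => (1:ℝ)) t)
      ((hgmeas j).sub (measurable_const.indicator hs))
      ⟨Cg + 1, by
        filter_upwards [hCg] with t ht
        have h1 : |s.indicator (fun _ => (1:ℝ)) t| ≤ 1 := by
          by_cases hts : t ∈ s <;> simp [Set.indicator_apply, hts]
        calc |g t j - s.indicator (fun _ => (1:ℝ)) t| ≤ |g t j| + |s.indicator (fun _ => (1:ℝ)) t| := abs_sub _ _
          _ ≤ Cg + 1 := add_le_add (ht j) h1⟩
      (by
        filter_upwards [hgle] with t ht
        have h1 : (0:ℝ) ≤ s.indicator (fun _ => (1:ℝ)) t := by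
          by_cases hts : t ∈ s <;> simp [Set.indicator_apply, hts]
        have := ht j
        linarith)
    have eq2 : (fun t => θ t j * ((g t j - s.indicator (fun _ => (1:ℝ)) t) - g t j)) =
        fun t => - s.indicator (fun t => θ t j) t := by
      funext t
      by_cases hts : t ∈ s <;> simp [Set.indicator_apply, hts]
    rw [eq2, integral_neg, integral_indicator hs] at hv
    linarith
  -- Step 2: complementarity
  have hcomp : ∀ j : Fin r, ∀ᵐ t ∂μ, θ t j * g t j = 0 := by
    intro j
    have hv := key j (fun _ => 0) measurable_const
      ⟨0, ae_of_all _ fun t => by simp⟩ (ae_of_all _ fun t => le_refl 0)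
    have hint : Integrable (fun t => θ t j * ((0:ℝ) - g t j)) μ := by
      have h1 : Integrable (fun t => g t j * θ t j) μ :=
        (hθ j).bdd_mul (c := Cg) ((hgmeas j).aestronglyMeasurable)
          (by filter_upwards [hCg] with t ht using by simpa using ht j)
      have : (fun t => θ t j * ((0:ℝ) - g t j)) = fun t => -(g t j * θ t j) := by
        funext t; ring
      rw [this]; exact h1.neg
    have hnonneg : ∀ᵐ t ∂μ, 0 ≤ θ t j * ((0:ℝ) - g t j) := by
      filter_upwards [hnn j, hgle] with t h1 h2
      exact mul_nonneg h1 (by linarith [h2 j])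
    have hz : ∫ t, θ t j * ((0:ℝ) - g t j) ∂μ = 0 :=
      le_antisymm hv (integral_nonneg_of_ae hnonneg)
    have := (integral_eq_zero_iff_of_nonneg_ae hnonneg hint).mp hz
    filter_upwards [this] with t ht
    have ht' : θ t j * ((0:ℝ) - g t j) = 0 := ht
    nlinarith [ht']
  rw [MeasureTheory.ae_all_iff]
  intro j
  filter_upwards [hnn j, hcomp j] with t h1 h2
  exact ⟨h1, h2⟩
end

section
/- Let z₀ satisfy the Robinson constraint qualification: for all (e, ξ, w) ∈ E × ℝⁿ × W there exist z ∈ Z, v ∈ cone((−∞,0]ⁿ − H(z₀)), v' ∈ cone(K − G(z₀)) with DF(z₀)z = e, DH(z₀)z − v = ξ, DG(z₀)z − v' = w. Suppose l ∈ ℝⁿ satisfies l ≥ 0 and lᵀH(z₀) = 0 (so l ∈ N((−∞,0]ⁿ, H(z₀))), w* ∈ N(K, G(z₀)), e* ∈ E*, and lᵀDH(z₀) + DF(z₀)*e* + DG(z₀)*w* = 0 as a functional on Z. Then l = 0, e* = 0 and w* = 0. -/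
/-!
Robinson's constraint qualification says that `A Z - C` is the whole space, where
`A z = (DH z, DF z, DG z)` is the linearized constraint map and `C` is the product of the cones
generated by `(-∞, 0]ⁿ - H(z₀)`, `{0}` and `K - G(z₀)`. The multiplier `φ = (l, e*, w*)` vanishes
on the range of `A` (stationarity) and is nonpositive on `C` (the normal cone conditions), so
`φ (A z - c) = -φ c ≥ 0`: a linear functional that is nonnegative everywhere is zero.
-/

section

variable {𝕜 V : Type*} [Field 𝕜] [LinearOrder 𝕜] [IsStrictOrderedRing 𝕜]
  [AddCommGroup V] [Module 𝕜 V]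

variable (𝕜) in
def coneSub (S : Set V) (x₀ : V) : Set V :=
  {v | ∃ (c : 𝕜) (y : V), 0 < c ∧ y ∈ S ∧ v = c • (y - x₀)}

theorem map_nonpos_of_mem_coneSub {S : Set V} {x₀ v : V} (f : V →ₗ[𝕜] 𝕜)
    (hf : ∀ y ∈ S, f (y - x₀) ≤ 0) (hv : v ∈ coneSub 𝕜 S x₀) : f v ≤ 0 := by
  obtain ⟨c, y, hc, hy, rfl⟩ := hv
  rw [map_smul, smul_eq_mul]
  exact mul_nonpos_of_nonneg_of_nonpos hc.le (hf y hy)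

theorem LinearMap.eq_zero_of_forall_nonneg {f : V →ₗ[𝕜] 𝕜} (hf : ∀ x, 0 ≤ f x) : f = 0 :=
  LinearMap.ext fun x => le_antisymm (by simpa using hf (-x)) (hf x)

variable {Z X : Type*} [AddCommGroup Z] [Module 𝕜 Z] [AddCommGroup X] [Module 𝕜 X]

theorem LinearMap.eq_zero_of_comp_eq_zero_of_nonpos_on {A : Z →ₗ[𝕜] X} {C : Set X}
    (hAC : ∀ x, ∃ z, ∃ c ∈ C, A z - c = x) {φ : X →ₗ[𝕜] 𝕜} (hφA : φ ∘ₗ A = 0)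
    (hφC : ∀ c ∈ C, φ c ≤ 0) : φ = 0 := by
  refine LinearMap.eq_zero_of_forall_nonneg fun x => ?_
  obtain ⟨z, c, hc, rfl⟩ := hAC x
  have hφAz : φ (A z) = 0 := LinearMap.congr_fun hφA z
  rw [map_sub, hφAz, zero_sub, neg_nonneg]
  exact hφC c hc

end

theorem dotProduct_sub_nonpos {ι R : Type*} [Fintype ι] [CommRing R] [PartialOrder R]
    [IsOrderedRing R] {l h y : ι → R} (hl : 0 ≤ l) (hlh : l ⬝ᵥ h = 0) (hy : y ≤ 0) :
    l ⬝ᵥ (y - h) ≤ 0 := by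
  rw [dotProduct_sub, hlh, sub_zero, ← dotProduct_zero l]
  exact dotProduct_le_dotProduct_of_nonneg_left hy hl

theorem robinson_cq_normality_general
    {Z E W : Type*} [NormedAddCommGroup Z] [NormedSpace ℝ Z]
    [NormedAddCommGroup E] [NormedSpace ℝ E]
    [NormedAddCommGroup W] [NormedSpace ℝ W]
    (n : ℕ)
    (DF : Z →L[ℝ] E) (DH : Z →L[ℝ] (Fin n → ℝ)) (DG : Z →L[ℝ] W)
    (Hz0 : Fin n → ℝ)
    (K : Set W)
    (Gz0 : W)
    (robinson : ∀ (e : E) (ξ : Fin n → ℝ) (w : W),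
      ∃ (z : Z) (v : Fin n → ℝ) (v' : W),
        (∃ (l : ℝ) (y : Fin n → ℝ), 0 < l ∧ (∀ i, y i ≤ 0) ∧ v = l • (y - Hz0)) ∧
        (∃ (l : ℝ) (y : W), 0 < l ∧ y ∈ K ∧ v' = l • (y - Gz0)) ∧
        DF z = e ∧ DH z - v = ξ ∧ DG z - v' = w)
    (l : Fin n → ℝ) (hl : ∀ i, 0 ≤ l i) (hcompl : ∑ i, l i * Hz0 i = 0)
    (estar : E →L[ℝ] ℝ) (wstar : W →L[ℝ] ℝ)
    (hwstar : ∀ x ∈ K, wstar (x - Gz0) ≤ 0)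
    (hstat : ∀ z : Z, (∑ i, l i * DH z i) + estar (DF z) + wstar (DG z) = 0) :
    l = 0 ∧ estar = 0 ∧ wstar = 0 := by
  let A : Z →ₗ[ℝ] (Fin n → ℝ) × E × W := DH.toLinearMap.prod (DF.toLinearMap.prod DG.toLinearMap)
  let C : Set ((Fin n → ℝ) × E × W) := coneSub ℝ (Set.Iic 0) Hz0 ×ˢ {0} ×ˢ coneSub ℝ K Gz0
  let φ : (Fin n → ℝ) × E × W →ₗ[ℝ] ℝ :=
    (dotProductBilin ℝ ℝ l).coprod (estar.toLinearMap.coprod wstar.toLinearMap)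
  have hAC : ∀ x, ∃ z, ∃ c ∈ C, A z - c = x := by
    rintro ⟨ξ, e, w⟩
    obtain ⟨z, v, v', hv, hv', hF, hH, hG⟩ := robinson e ξ w
    exact ⟨z, (v, 0, v'), ⟨hv, rfl, hv'⟩, by simp [A, hF, hH, hG]⟩
  have hφA : φ ∘ₗ A = 0 := LinearMap.ext fun z => by
    simpa [φ, A, dotProduct, add_assoc] using hstat z
  have hφC : ∀ c ∈ C, φ c ≤ 0 := by
    rintro ⟨v, _, v'⟩ ⟨hv, rfl, hv'⟩
    have hlv := map_nonpos_of_mem_coneSub (dotProductBilin ℝ ℝ l)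
      (fun y hy => dotProduct_sub_nonpos hl hcompl hy) hv
    have hwv' := map_nonpos_of_mem_coneSub wstar.toLinearMap hwstar hv'
    simp only [φ, LinearMap.coprod_apply, map_zero, zero_add] at hlv hwv' ⊢
    linarith
  have hφ : φ = 0 := LinearMap.eq_zero_of_comp_eq_zero_of_nonpos_on hAC hφA hφC
  refine ⟨funext fun i => ?_, ContinuousLinearMap.ext fun e => ?_,
    ContinuousLinearMap.ext fun w => ?_⟩
  · simpa [φ] using LinearMap.congr_fun hφ (Pi.single i 1, 0, 0)
  · simpa [φ] using LinearMap.congr_fun hφ (0, e, 0)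
  · simpa [φ] using LinearMap.congr_fun hφ (0, 0, w)

theorem robinson_cq_normality
    {Z E W : Type*} [NormedAddCommGroup Z] [NormedSpace ℝ Z]
    [NormedAddCommGroup E] [NormedSpace ℝ E]
    [NormedAddCommGroup W] [NormedSpace ℝ W]
    (n : ℕ)
    (DF : Z →L[ℝ] E) (DH : Z →L[ℝ] (Fin n → ℝ)) (DG : Z →L[ℝ] W)
    (Hz0 : Fin n → ℝ) (hHz0 : ∀ i, Hz0 i ≤ 0)
    (K : Set W) (hKconv : Convex ℝ K) (hKclosed : IsClosed K)
    (Gz0 : W) (hGz0 : Gz0 ∈ K)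
    (robinson : ∀ (e : E) (ξ : Fin n → ℝ) (w : W),
      ∃ (z : Z) (v : Fin n → ℝ) (v' : W),
        (∃ (l : ℝ) (y : Fin n → ℝ), 0 < l ∧ (∀ i, y i ≤ 0) ∧ v = l • (y - Hz0)) ∧
        (∃ (l : ℝ) (y : W), 0 < l ∧ y ∈ K ∧ v' = l • (y - Gz0)) ∧
        DF z = e ∧ DH z - v = ξ ∧ DG z - v' = w)
    (l : Fin n → ℝ) (hl : ∀ i, 0 ≤ l i) (hcompl : ∑ i, l i * Hz0 i = 0)
    (estar : E →L[ℝ] ℝ) (wstar : W →L[ℝ] ℝ)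
    (hwstar : ∀ x ∈ K, wstar (x - Gz0) ≤ 0)
    (hstat : ∀ z : Z, (∑ i, l i * DH z i) + estar (DF z) + wstar (DG z) = 0) :
    l = 0 ∧ estar = 0 ∧ wstar = 0 :=
  robinson_cq_normality_general n DF DH DG Hz0 K Gz0 robinson l hl hcompl estar wstar hwstar hstat
end
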